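/- Let H be a real Hilbert space, a symmetric bounded coercive bilinear form a with coercivity constant c > 0, V_f a closed subspace of H, P : H → H a bounded linear map with ker-condition V_f = {v : Pv = 0}, and F(v) = ⟨f, v⟩ for some f ∈ H. Let u solve a(u,v) = ⟨f,v⟩ on H and u_ms be its Galerkin projection onto the a-orthogonal complement of V_f, so that e := u − u_ms ∈ V_f. Suppose P is an orthogonal projection and there is a constant C_a > 0 with ‖v − Pv‖ ≤ C_a · a(v,v)^{1/2} for all v ∈ H. Then a(e,e)^{1/2} ≤ C_a ‖f − Pf‖. -/

import Mathlib

open RealInnerProductSpace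

theorem Real.sqrt_le_of_le_mul_sqrt {x K : ℝ} (hK : 0 ≤ K) (h : x ≤ K * √x) : √x ≤ K := by
  rcases le_or_gt x 0 with hx | hx
  · rwa [Real.sqrt_eq_zero_of_nonpos hx]
  · have hsqrt : 0 < √x := Real.sqrt_pos.mpr hx
    refine le_of_mul_le_mul_right ?_ hsqrt
    rwa [Real.mul_self_sqrt hx.le]

theorem LinearMap.IsSymmetric.inner_sub_apply_left_of_apply_eq_zero
    {𝕜 E : Type*} [RCLike 𝕜] [NormedAddCommGroup E] [InnerProductSpace 𝕜 E]
    {T : E →ₗ[𝕜] E} (hT : T.IsSymmetric) (x : E) {y : E} (hy : T y = 0) :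
    inner 𝕜 (x - T x) y = inner 𝕜 x y := by
  rw [inner_sub_left, hT, hy, inner_zero_right, sub_zero]

theorem ideal_multiscale_error_bound_general
    {H : Type*} [NormedAddCommGroup H] [InnerProductSpace ℝ H]
    (a : H →ₗ[ℝ] H →ₗ[ℝ] ℝ)
    (Vf : Submodule ℝ H)
    (P : H →L[ℝ] H)
    (hker : ∀ v : H, v ∈ Vf ↔ P v = 0)
    (hsa : ∀ u v : H, ⟪P u, v⟫ = ⟪u, P v⟫)
    (Ca : ℝ) (hCa : 0 < Ca)
    (happrox : ∀ v : H, ‖v - P v‖ ≤ Ca * Real.sqrt (a v v))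
    (f : H)
    (u : H) (hu : ∀ v : H, a u v = ⟪f, v⟫)
    (ums : H)
    (hms : ∀ w ∈ Vf, a ums w = 0)
    (he : u - ums ∈ Vf) :
    Real.sqrt (a (u - ums) (u - ums)) ≤ Ca * ‖f - P f‖ := by
  set e := u - ums
  have hPsymm : (P : H →ₗ[ℝ] H).IsSymmetric := hsa
  have hPe : P e = 0 := (hker e).mp he
  have hgalerkin : a e e = ⟪f, e⟫ := by
    rw [show a e = a u - a ums from map_sub a u ums, LinearMap.sub_apply, hu, hms e he, sub_zero]
  refine Real.sqrt_le_of_le_mul_sqrt (by positivity) ?_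
  calc a e e = ⟪f - P f, e⟫ := by
        rw [hgalerkin]
        exact (hPsymm.inner_sub_apply_left_of_apply_eq_zero f hPe).symm
    _ ≤ ‖f - P f‖ * ‖e - P e‖ := by
        rw [hPe, sub_zero]
        exact real_inner_le_norm _ _
    _ ≤ ‖f - P f‖ * (Ca * √(a e e)) := by gcongr; exact happrox e
    _ = Ca * ‖f - P f‖ * √(a e e) := by ring

/-- Abstract version of the idealized error bound (Theorem thm:umshH):
`a(e,e)^{1/2} ≤ C_a ‖f − Pf‖` for the ideal multiscale error `e = u − u_ms ∈ V_f`. -/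
theorem ideal_multiscale_error_bound
    {H : Type*} [NormedAddCommGroup H] [InnerProductSpace ℝ H] [CompleteSpace H]
    (a : H →ₗ[ℝ] H →ₗ[ℝ] ℝ)
    (hsym : ∀ u v : H, a u v = a v u)
    (c β : ℝ) (hc : 0 < c)
    (hcoer : ∀ v : H, c * ‖v‖ ^ 2 ≤ a v v)
    (hbdd : ∀ u v : H, |a u v| ≤ β * ‖u‖ * ‖v‖)
    (Vf : Submodule ℝ H) (hVf : IsClosed (Vf : Set H))
    (P : H →L[ℝ] H)
    (hker : ∀ v : H, v ∈ Vf ↔ P v = 0)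
    (hidem : ∀ v : H, P (P v) = P v)
    (hsa : ∀ u v : H, ⟪P u, v⟫ = ⟪u, P v⟫)
    (Ca : ℝ) (hCa : 0 < Ca)
    (happrox : ∀ v : H, ‖v - P v‖ ≤ Ca * Real.sqrt (a v v))
    (f : H)
    (u : H) (hu : ∀ v : H, a u v = ⟪f, v⟫)
    (ums : H)
    (hms : ∀ w ∈ Vf, a ums w = 0)
    (he : u - ums ∈ Vf) :
    Real.sqrt (a (u - ums) (u - ums)) ≤ Ca * ‖f - P f‖ :=
  ideal_multiscale_error_bound_general a Vf P hker hsa Ca hCa happrox f u hu ums hms he
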